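/- For n ≥ 0 define real matrices a_n, b_n of size 2^n × 2^n recursively: a_0 = b_0 = (1) is the 1×1 identity, and for n ≥ 0: a_{n+1} = fromBlocks 0 b_n I 0 and b_{n+1} = fromBlocks I 0 0 a_n (blocks of size 2^n, I the identity, 0 the zero matrix). Let α = (2 − √2)/2 and β = (√2 − 1)/2, and set L_n = I − α(a_n + a_nᵀ) − β(b_n + b_nᵀ). Write L_{n+1} in 2×2 block form [[P, Q], [R, T]] with blocks of size 2^n. Then for every n ≥ 0: P = (2 − √2)·I is invertible, and the Schur complement satisfies T − R P⁻¹ Q = (√2/2) · L_n. -/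

import Mathlib

open Matrix

/-!
Since `b_n` is a permutation matrix, hence orthogonal, `(I + b_nᵀ)(b_n + I) = 2I + b_n + b_nᵀ`.
With `α = (2 − √2)/2` and `β = (√2 − 1)/2`, the block form of `L_{n+1}` is
`[[(2 − √2)I, −α(b_n + I)], [−α(I + b_nᵀ), I − β(a_n + a_nᵀ)]]`,
so the Schur complement is `(1 − α)I − β(a_n + a_nᵀ) − (α/2)(b_n + b_nᵀ)`. The constants are
chosen so that `1 − α = √2/2`, `β = (√2/2)α` and `α/2 = (√2/2)β`, which makes this `(√2/2)L_n`.
-/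

/-- `Fin (2^n) ⊕ Fin (2^n) ≃ Fin (2^(n+1))`, used to assemble block matrices. -/
def finEquiv2 (n : ℕ) : Fin (2 ^ n) ⊕ Fin (2 ^ n) ≃ Fin (2 ^ (n + 1)) :=
  finSumFinEquiv.trans (finCongr (by ring))

/-- The permutation matrices `(a_n, b_n)` by which the two generators of the Basilica group
act on level `n` of the binary rooted tree: `a_{n+1} = fromBlocks 0 b_n I 0`,
`b_{n+1} = fromBlocks I 0 0 a_n`. -/
noncomputable def basGen : (n : ℕ) →
    Matrix (Fin (2 ^ n)) (Fin (2 ^ n)) ℝ × Matrix (Fin (2 ^ n)) (Fin (2 ^ n)) ℝ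
  | 0 => (1, 1)
  | n + 1 =>
    let p := basGen n
    (Matrix.reindex (finEquiv2 n) (finEquiv2 n) (Matrix.fromBlocks 0 p.2 1 0),
     Matrix.reindex (finEquiv2 n) (finEquiv2 n) (Matrix.fromBlocks 1 0 0 p.1))

/-- The Dirichlet form matrix `L_n = I − α(a_n + a_nᵀ) − β(b_n + b_nᵀ)` with
`α = (2 − √2)/2` and `β = (√2 − 1)/2`. -/
noncomputable def basL (n : ℕ) : Matrix (Fin (2 ^ n)) (Fin (2 ^ n)) ℝ :=
  1 - ((2 - Real.sqrt 2) / 2) • ((basGen n).1 + (basGen n).1ᵀ) -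
    ((Real.sqrt 2 - 1) / 2) • ((basGen n).2 + (basGen n).2ᵀ)
section ScalarMatrix

variable {m : Type*} [Fintype m] [DecidableEq m] {𝕜 : Type*} [Field 𝕜] {c : 𝕜}

theorem Matrix.isUnit_smul_one (hc : c ≠ 0) : IsUnit (c • (1 : Matrix m m 𝕜)) := by
  rw [← Algebra.algebraMap_eq_smul_one]
  exact (isUnit_iff_ne_zero.2 hc).map _

theorem Matrix.inv_smul_one (hc : c ≠ 0) : (c • (1 : Matrix m m 𝕜))⁻¹ = c⁻¹ • 1 :=
  Matrix.inv_eq_right_inv <| by rw [smul_mul_smul, mul_one, mul_inv_cancel₀ hc, one_smul]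

end ScalarMatrix

theorem basGen_transpose_mul_self (n : ℕ) :
    (basGen n).1ᵀ * (basGen n).1 = 1 ∧ (basGen n).2ᵀ * (basGen n).2 = 1 := by
  induction n with
  | zero => simp [basGen]
  | succ n ih =>
    simp only [basGen, reindex_apply, transpose_submatrix, submatrix_mul_equiv,
      fromBlocks_transpose, fromBlocks_multiply]
    simp [ih.1, ih.2, fromBlocks_one]

theorem basGen_succ_fst_submatrix (n : ℕ) :
    (basGen (n + 1)).1.submatrix (finEquiv2 n) (finEquiv2 n) = fromBlocks 0 (basGen n).2 1 0 := by
  simp [basGen]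

theorem basGen_succ_snd_submatrix (n : ℕ) :
    (basGen (n + 1)).2.submatrix (finEquiv2 n) (finEquiv2 n) = fromBlocks 1 0 0 (basGen n).1 := by
  simp [basGen]

theorem basL_succ_submatrix (n : ℕ) :
    (basL (n + 1)).submatrix (finEquiv2 n) (finEquiv2 n) =
      fromBlocks ((2 - √2) • 1) (-((2 - √2) / 2) • ((basGen n).2 + 1))
        (-((2 - √2) / 2) • (1 + (basGen n).2ᵀ))
        (1 - ((√2 - 1) / 2) • ((basGen n).1 + (basGen n).1ᵀ)) := by
  simp only [basL, submatrix_sub, submatrix_add, submatrix_smul, Pi.sub_apply, Pi.add_apply,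
    Pi.smul_apply]
  simp only [← transpose_submatrix, submatrix_one_equiv, basGen_succ_fst_submatrix,
    basGen_succ_snd_submatrix]
  simp only [← fromBlocks_one, fromBlocks_transpose, fromBlocks_add, fromBlocks_smul,
    sub_eq_add_neg, fromBlocks_neg, transpose_zero, transpose_one, fromBlocks_inj]
  refine ⟨by module, by module, by module, by module⟩

/-- Writing `L_{n+1}` in 2×2 block form `[[P, Q], [R, T]]` with blocks of size `2^n`:
`P = (2 − √2)·I` is invertible, and the Schur complement satisfies
`T − R P⁻¹ Q = (√2/2) · L_n`. -/
theorem basilica_schur_complement (n : ℕ) :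
    ((basL (n + 1)).submatrix (finEquiv2 n) (finEquiv2 n)).toBlocks₁₁ =
        (2 - Real.sqrt 2) • (1 : Matrix (Fin (2 ^ n)) (Fin (2 ^ n)) ℝ) ∧
      IsUnit ((basL (n + 1)).submatrix (finEquiv2 n) (finEquiv2 n)).toBlocks₁₁ ∧
      ((basL (n + 1)).submatrix (finEquiv2 n) (finEquiv2 n)).toBlocks₂₂ -
          ((basL (n + 1)).submatrix (finEquiv2 n) (finEquiv2 n)).toBlocks₂₁ *
            (((basL (n + 1)).submatrix (finEquiv2 n) (finEquiv2 n)).toBlocks₁₁)⁻¹ *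
            ((basL (n + 1)).submatrix (finEquiv2 n) (finEquiv2 n)).toBlocks₁₂ =
        (Real.sqrt 2 / 2) • basL n := by
  have hs : √2 * √2 = 2 := Real.mul_self_sqrt zero_le_two
  have hc : 2 - √2 ≠ 0 := by nlinarith [Real.sqrt_nonneg 2]
  rw [basL_succ_submatrix, toBlocks_fromBlocks₁₁, toBlocks_fromBlocks₁₂,
    toBlocks_fromBlocks₂₁, toBlocks_fromBlocks₂₂, inv_smul_one hc]
  refine ⟨rfl, isUnit_smul_one hc, ?_⟩
  set b := (basGen n).2
  have hb : (1 + bᵀ) * (b + 1) = (2 : ℝ) • 1 + (b + bᵀ) := by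
    rw [add_mul, mul_add, mul_add, (basGen_transpose_mul_self n).2, two_smul]
    noncomm_ring
  simp only [smul_mul_smul, mul_one, hb, basL]
  match_scalars <;> field_simp <;> linarith
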